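/- State-dependent error version of the rollout bound: let π be a stationary policy proper from x, let V* be bounded with V*(t) = 0 and V* = T V*, and suppose there is a nonnegative measurable function e : X → [0,∞) such that, for every k ≥ 0, E[ f(x_k, π(x_k)) + V*(x_{k+1}) | x_k ] ≤ V*(x_k) + e(x_k) along the closed-loop trajectory. Then J^π(x) − V*(x) ≤ E[ Σ_{k=0}^{τ−1} e(x_k) ]. -/

import Mathlib

/-!
Write `x_k` for the closed-loop trajectory, and `c(y) = f(y, π y)` and `e(y)` for the stage
cost and the error, both set to `0` at the terminal state. Since `x_k` is a function of
`ξ_0, …, ξ_{k-1}`, it is independent of `ξ_k`, so `E V*(x_{k+1}) = E ∫ V*(F(x_k, π x_k, w)) dμ(w)`,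
and integrating the one-step inequality gives `E c(x_k) + E V*(x_{k+1}) ≤ E V*(x_k) + E e(x_k)`.
These telescope to `Σ_{k<n} E c(x_k) + E V*(x_n) ≤ V*(x) + Σ_{k<n} E e(x_k)`, and
`E V*(x_n) → 0` by dominated convergence, because the trajectory is absorbed at `t` almost surely
and `V*(t) = 0`.
-/

open MeasureTheory ProbabilityTheory Filter
open scoped ENNReal

open Classical in
/-- Bellman operator of the SSP: `(T V)(x) = inf_{u ∈ U(x)} ( f(x,u) + ∫ V(F(x,u,w)) dμ(w) )`
for nonterminal `x`, and `(T V)(t) = 0`. -/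
noncomputable def bellman {X U W : Type*} [MeasurableSpace W] (μ : Measure W)
    (t : X) (Ua : X → Set U) (f : X → U → ℝ) (F : X → U → W → X)
    (V : X → ℝ) (x : X) : ℝ :=
  if x = t then 0 else ⨅ u : Ua x, (f x (u : U) + ∫ w, V (F x (u : U) w) ∂μ)

/-- Closed-loop trajectory driven by a disturbance sequence `ω : ℕ → W`:
`x₀ = x`, `x_{k+1} = F(x_k, π(x_k), ω_k)`. -/
def traj {X U W : Type*} (F : X → U → W → X) (π : X → U) (x : X) (ω : ℕ → W) : ℕ → X
  | 0 => x
  | k + 1 => F (traj F π x ω k) (π (traj F π x ω k)) (ω k)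

/-- The trajectory as a family of random variables on an abstract sample space `Ω`,
given the disturbance random variables `ξ k : Ω → W`. -/
def trajOn {X U W Ω : Type*} (F : X → U → W → X) (π : X → U) (x : X)
    (ξ : ℕ → Ω → W) (k : ℕ) (ω : Ω) : X :=
  traj F π x (fun i => ξ i ω) k

/-- Hitting time `τ = inf { k ≥ 0 : x_k = t }` of the terminal state (`∞` if never reached),
valued in `ℝ≥0∞`. -/
noncomputable def hitTime {X Ω : Type*} (t : X) (Y : ℕ → Ω → X) (ω : Ω) : ℝ≥0∞ :=
  ⨅ (k : ℕ) (_ : Y k ω = t), (k : ℝ≥0∞)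

/-- Total expected cost `J = E[ Σ_{k=0}^{τ-1} f(x_k, π(x_k)) ]` (in `ℝ≥0∞`; the stage cost
is nonnegative). -/
noncomputable def totalCost {X U Ω : Type*} [MeasurableSpace Ω] (P : Measure Ω)
    (t : X) (f : X → U → ℝ) (π : X → U) (Y : ℕ → Ω → X) : ℝ≥0∞ :=
  ∫⁻ ω, ∑' (k : ℕ), (if (k : ℝ≥0∞) < hitTime t Y ω
    then ENNReal.ofReal (f (Y k ω) (π (Y k ω))) else 0) ∂P

/-- Expected hitting time `E[τ]` (in `ℝ≥0∞`). -/
noncomputable def expHit {X Ω : Type*} [MeasurableSpace Ω] (P : Measure Ω)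
    (t : X) (Y : ℕ → Ω → X) : ℝ≥0∞ :=
  ∫⁻ ω, hitTime t Y ω ∂P

open Topology

namespace ProbabilityTheory

variable {Ω X W : Type*} [MeasurableSpace Ω] [MeasurableSpace X] [MeasurableSpace W]

theorem IndepFun.integral_comp_eq_integral_integral {P : Measure Ω} [IsFiniteMeasure P]
    {μ : Measure W} [SFinite μ] {Z : Ω → X} {ξ : Ω → W} (hind : IndepFun Z ξ P)
    (hZ : AEMeasurable Z P) (hξ : AEMeasurable ξ P) (hlaw : P.map ξ = μ) {g : X → W → ℝ}
    (hg : Integrable (Function.uncurry g) ((P.map Z).prod μ)) :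
    ∫ ω, g (Z ω) (ξ ω) ∂P = ∫ ω, ∫ w, g (Z ω) w ∂μ ∂P := by
  have hjoint : P.map (fun ω => (Z ω, ξ ω)) = (P.map Z).prod μ := by
    rw [hind.map_prod_eq_prod_map_map hZ hξ, hlaw]
  calc ∫ ω, g (Z ω) (ξ ω) ∂P
      = ∫ p, Function.uncurry g p ∂(P.map fun ω => (Z ω, ξ ω)) :=
        (integral_map (hZ.prodMk hξ) (hjoint ▸ hg.aestronglyMeasurable)).symm
    _ = ∫ y, ∫ w, g y w ∂μ ∂(P.map Z) := by rw [hjoint]; exact integral_prod _ hg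
    _ = ∫ ω, ∫ w, g (Z ω) w ∂μ ∂P :=
        integral_map hZ hg.integral_prod_left.aestronglyMeasurable

end ProbabilityTheory

theorem tsum_le_of_telescoping {a b c : ℕ → ℝ} (ha : Summable a) (hc : Summable c)
    (hstep : ∀ k, a k + b (k + 1) ≤ b k + c k) (hb : Tendsto b atTop (𝓝 0)) :
    ∑' k, a k ≤ b 0 + ∑' k, c k := by
  have hpartial : ∀ n, ∑ k ∈ Finset.range n, a k + b n ≤ b 0 + ∑ k ∈ Finset.range n, c k := by
    intro n
    induction n with
    | zero => simp
    | succ n ih => rw [Finset.sum_range_succ, Finset.sum_range_succ]; linarith [hstep n]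
  simpa using le_of_tendsto_of_tendsto' (ha.hasSum.tendsto_sum_nat.add hb)
    (tendsto_const_nhds.add hc.hasSum.tendsto_sum_nat) hpartial

theorem coe_tsum_ofReal_le_of_telescoping {a b c : ℕ → ℝ} (ha : ∀ k, 0 ≤ a k)
    (hc : ∀ k, 0 ≤ c k) (ha_fin : ∑' k, ENNReal.ofReal (a k) ≠ ∞)
    (hc_fin : ∑' k, ENNReal.ofReal (c k) ≠ ∞)
    (hstep : ∀ k, a k + b (k + 1) ≤ b k + c k) (hb : Tendsto b atTop (𝓝 0)) :
    ((∑' k, ENNReal.ofReal (a k) : ℝ≥0∞) : EReal)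
      ≤ b 0 + ((∑' k, ENNReal.ofReal (c k) : ℝ≥0∞) : EReal) := by
  have summable_of_fin {u : ℕ → ℝ} (hu : ∀ k, 0 ≤ u k) (hfin : ∑' k, ENNReal.ofReal (u k) ≠ ∞) :
      Summable u := by
    simpa [ENNReal.toReal_ofReal (hu _)] using ENNReal.summable_toReal hfin
  have hsa := summable_of_fin ha ha_fin
  have hsc := summable_of_fin hc hc_fin
  rw [← ENNReal.ofReal_tsum_of_nonneg ha hsa, ← ENNReal.ofReal_tsum_of_nonneg hc hsc,
    EReal.coe_ennreal_ofReal, EReal.coe_ennreal_ofReal, max_eq_left (tsum_nonneg ha),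
    max_eq_left (tsum_nonneg hc), ← EReal.coe_add, EReal.coe_le_coe_iff]
  exact tsum_le_of_telescoping hsa hsc hstep hb

section Trajectory

variable {X U W Ω : Type*} {F : X → U → W → X} {π : X → U} {x t : X} {ξ : ℕ → Ω → W}

theorem trajOn_zero (ω : Ω) : trajOn F π x ξ 0 ω = x := rfl

theorem trajOn_succ (k : ℕ) (ω : Ω) :
    trajOn F π x ξ (k + 1) ω = F (trajOn F π x ξ k ω) (π (trajOn F π x ξ k ω)) (ξ k ω) := rfl

theorem trajOn_eq_of_le (hFt : ∀ w, F t (π t) w = t) {ω : Ω} {k n : ℕ} (hkn : k ≤ n)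
    (hk : trajOn F π x ξ k ω = t) : trajOn F π x ξ n ω = t := by
  induction n, hkn using Nat.le_induction with
  | base => exact hk
  | succ n _ ih => rw [trajOn_succ, ih, hFt]

variable [MeasurableSpace X] [MeasurableSpace U] [MeasurableSpace W]

theorem measurable_trajOn_iSup_comap (hF : Measurable fun p : X × U × W => F p.1 p.2.1 p.2.2)
    (hπ : Measurable π) (k : ℕ) :
    Measurable[⨆ j ∈ Set.Iio k, MeasurableSpace.comap (ξ j) ‹_›] (trajOn F π x ξ k) := by
  induction k with
  | zero => exact measurable_const
  | succ k ih =>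
    have hpast := ih.mono (biSup_mono fun j hj => lt_trans hj k.lt_succ_self) le_rfl
    have hξk : Measurable[⨆ j ∈ Set.Iio (k + 1), MeasurableSpace.comap (ξ j) ‹_›] (ξ k) :=
      (comap_measurable (ξ k)).mono (le_iSup₂_of_le k k.lt_succ_self le_rfl) le_rfl
    exact hF.comp (hpast.prodMk ((hπ.comp hpast).prodMk hξk))

variable [MeasurableSpace Ω]

theorem measurable_trajOn (hF : Measurable fun p : X × U × W => F p.1 p.2.1 p.2.2)
    (hπ : Measurable π) (hξ : ∀ k, Measurable (ξ k)) (k : ℕ) :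
    Measurable (trajOn F π x ξ k) :=
  (measurable_trajOn_iSup_comap hF hπ k).mono (iSup₂_le fun j _ => (hξ j).comap_le) le_rfl

theorem indepFun_trajOn (hF : Measurable fun p : X × U × W => F p.1 p.2.1 p.2.2)
    (hπ : Measurable π) (hξ : ∀ k, Measurable (ξ k)) {P : Measure Ω} (hind : iIndepFun ξ P)
    (k : ℕ) : IndepFun (trajOn F π x ξ k) (ξ k) P := by
  have h := indep_iSup_of_disjoint (fun j => (hξ j).comap_le) hind.iIndep
    (S := Set.Iio k) (T := {k}) (by simp)
  simp only [Set.mem_singleton_iff, iSup_iSup_eq_left] at h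
  rw [IndepFun_iff_Indep]
  exact indep_of_indep_of_le_left h (measurable_trajOn_iSup_comap hF hπ k).comap_le

end Trajectory

section HittingTime

variable {X Ω : Type*} {t : X} {Y : ℕ → Ω → X}

theorem lt_hitTime_iff {ω : Ω} (habs : ∀ k n, k ≤ n → Y k ω = t → Y n ω = t) {k : ℕ} :
    (k : ℝ≥0∞) < hitTime t Y ω ↔ Y k ω ≠ t := by
  refine ⟨fun h hk => h.not_ge (iInf₂_le k hk), fun hk => ?_⟩
  calc (k : ℝ≥0∞) < k + 1 := ENNReal.lt_add_right (by simp) one_ne_zero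
    _ ≤ hitTime t Y ω := le_iInf₂ fun j hj => by
        have hkj : k < j := lt_of_not_ge fun hjk => hk (habs j k hjk hj)
        exact_mod_cast hkj

theorem exists_eq_of_hitTime_lt_top {ω : Ω} (h : hitTime t Y ω < ∞) : ∃ k, Y k ω = t := by
  by_contra! hne
  simp [hitTime, hne] at h

variable [MeasurableSpace X] [MeasurableSpace Ω] {P : Measure Ω}

theorem lintegral_tsum_ite_lt_hitTime [MeasurableSingletonClass X] (hY : ∀ k, Measurable (Y k))
    (habs : ∀ ω k n, k ≤ n → Y k ω = t → Y n ω = t) {g : X → ℝ} (hg : Measurable g) :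
    ∫⁻ ω, ∑' k : ℕ, (if (k : ℝ≥0∞) < hitTime t Y ω then ENNReal.ofReal (g (Y k ω)) else 0) ∂P
      = ∑' k, ∫⁻ ω, ENNReal.ofReal (({t}ᶜ : Set X).indicator g (Y k ω)) ∂P := by
  have hgY : ∀ k, AEMeasurable (fun ω => ENNReal.ofReal (({t}ᶜ : Set X).indicator g (Y k ω))) P :=
    fun k => ((hg.indicator (measurableSet_singleton t).compl).comp (hY k)).ennreal_ofReal
      |>.aemeasurable
  rw [← lintegral_tsum hgY]
  refine lintegral_congr fun ω => tsum_congr fun k => ?_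
  by_cases h : Y k ω = t <;> simp [lt_hitTime_iff (habs ω), h]

theorem tendsto_integral_comp_of_hitTime_lt_top [IsFiniteMeasure P] (hY : ∀ k, Measurable (Y k))
    (habs : ∀ ω k n, k ≤ n → Y k ω = t → Y n ω = t) (hτ : ∀ᵐ ω ∂P, hitTime t Y ω < ∞)
    {V : X → ℝ} (hV : Measurable V) {C : ℝ} (hC : ∀ y, |V y| ≤ C) (hVt : V t = 0) :
    Tendsto (fun n => ∫ ω, V (Y n ω) ∂P) atTop (𝓝 0) := by
  rw [← integral_zero Ω ℝ]
  refine tendsto_integral_of_dominated_convergence (fun _ => C)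
    (fun n => (hV.comp (hY n)).aestronglyMeasurable) (integrable_const C)
    (fun n => ae_of_all _ fun ω => (Real.norm_eq_abs _).trans_le (hC _)) ?_
  filter_upwards [hτ] with ω hω
  obtain ⟨k, hk⟩ := exists_eq_of_hitTime_lt_top hω
  refine tendsto_const_nhds.congr' ?_
  filter_upwards [eventually_ge_atTop k] with n hn
  rw [habs ω k n hn hk, hVt]

end HittingTime

section Expectation

variable {Ω X W : Type*} [MeasurableSpace Ω] [MeasurableSpace X] [MeasurableSpace W]
  {P : Measure Ω}

theorem integrable_of_tsum_lintegral_ne_top {g : ℕ → Ω → ℝ} (hg : ∀ k, Measurable (g k))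
    (hg0 : ∀ k ω, 0 ≤ g k ω) (hfin : ∑' k, ∫⁻ ω, ENNReal.ofReal (g k ω) ∂P ≠ ∞) (k : ℕ) :
    Integrable (g k) P :=
  ⟨(hg k).aestronglyMeasurable, (hasFiniteIntegral_iff_ofReal (ae_of_all _ (hg0 k))).2
    ((ENNReal.le_tsum k).trans_lt hfin.lt_top)⟩

theorem tsum_lintegral_ofReal_eq_tsum_ofReal_integral {g : ℕ → Ω → ℝ}
    (hg : ∀ k, Measurable (g k)) (hg0 : ∀ k ω, 0 ≤ g k ω)
    (hfin : ∑' k, ∫⁻ ω, ENNReal.ofReal (g k ω) ∂P ≠ ∞) :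
    ∑' k, ∫⁻ ω, ENNReal.ofReal (g k ω) ∂P = ∑' k, ENNReal.ofReal (∫ ω, g k ω ∂P) :=
  tsum_congr fun k => (ofReal_integral_eq_lintegral_ofReal
    (integrable_of_tsum_lintegral_ne_top hg hg0 hfin k) (ae_of_all _ (hg0 k))).symm

theorem integral_add_integral_comp_le [IsFiniteMeasure P] {μ : Measure W} [IsFiniteMeasure μ]
    {Z : Ω → X} {ξ : Ω → W} (hind : IndepFun Z ξ P) (hZ : Measurable Z) (hξ : Measurable ξ)
    (hlaw : P.map ξ = μ) {Φ : X → W → X} (hΦ : Measurable (Function.uncurry Φ))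
    {V : X → ℝ} (hV : Measurable V) {C : ℝ} (hC : ∀ y, |V y| ≤ C) {c d : X → ℝ}
    (hc : Integrable (fun ω => c (Z ω)) P) (hd : Integrable (fun ω => d (Z ω)) P)
    (hstep : ∀ ω, c (Z ω) + ∫ w, V (Φ (Z ω) w) ∂μ ≤ V (Z ω) + d (Z ω)) :
    ∫ ω, c (Z ω) ∂P + ∫ ω, V (Φ (Z ω) (ξ ω)) ∂P ≤ ∫ ω, V (Z ω) ∂P + ∫ ω, d (Z ω) ∂P := by
  have hVΦ : Integrable (Function.uncurry fun y w => V (Φ y w)) ((P.map Z).prod μ) :=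
    .of_bound (hV.comp hΦ).aestronglyMeasurable C
      (ae_of_all _ fun _ => (Real.norm_eq_abs _).trans_le (hC _))
  have hVZ : Integrable (fun ω => V (Z ω)) P :=
    .of_bound (hV.comp hZ).aestronglyMeasurable C
      (ae_of_all _ fun _ => (Real.norm_eq_abs _).trans_le (hC _))
  have hPV : Integrable (fun ω => ∫ w, V (Φ (Z ω) w) ∂μ) P :=
    hVΦ.integral_prod_left.comp_measurable hZ
  rw [hind.integral_comp_eq_integral_integral hZ.aemeasurable hξ.aemeasurable hlaw hVΦ,
    ← integral_add hc hPV, ← integral_add hVZ hd]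
  exact integral_mono (hc.add hPV) (hVZ.add hd) hstep

theorem coe_tsum_lintegral_le_of_one_step_le [IsFiniteMeasure P] {μ : Measure W}
    [IsFiniteMeasure μ] {Y : ℕ → Ω → X} {ξ : ℕ → Ω → W} {Φ : X → W → X}
    (hY : ∀ k, Measurable (Y k)) (hξ : ∀ k, Measurable (ξ k))
    (hYsucc : ∀ k ω, Y (k + 1) ω = Φ (Y k ω) (ξ k ω)) (hind : ∀ k, IndepFun (Y k) (ξ k) P)
    (hlaw : ∀ k, P.map (ξ k) = μ) (hΦ : Measurable (Function.uncurry Φ))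
    {V : X → ℝ} (hV : Measurable V) {C : ℝ} (hC : ∀ y, |V y| ≤ C)
    (hVlim : Tendsto (fun n => ∫ ω, V (Y n ω) ∂P) atTop (𝓝 0))
    {c d : X → ℝ} (hc : Measurable c) (hd : Measurable d) (hc0 : ∀ y, 0 ≤ c y)
    (hd0 : ∀ y, 0 ≤ d y) (hc_fin : ∑' k, ∫⁻ ω, ENNReal.ofReal (c (Y k ω)) ∂P ≠ ∞)
    (hstep : ∀ k ω, c (Y k ω) + ∫ w, V (Φ (Y k ω) w) ∂μ ≤ V (Y k ω) + d (Y k ω)) :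
    ((∑' k, ∫⁻ ω, ENNReal.ofReal (c (Y k ω)) ∂P : ℝ≥0∞) : EReal)
      ≤ ∫ ω, V (Y 0 ω) ∂P + ((∑' k, ∫⁻ ω, ENNReal.ofReal (d (Y k ω)) ∂P : ℝ≥0∞) : EReal) := by
  rcases eq_or_ne (∑' k, ∫⁻ ω, ENNReal.ofReal (d (Y k ω)) ∂P) ∞ with hd_top | hd_fin
  · simp [hd_top]
  have hcY : ∀ k, Measurable fun ω => c (Y k ω) := fun k => hc.comp (hY k)
  have hdY : ∀ k, Measurable fun ω => d (Y k ω) := fun k => hd.comp (hY k)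
  have hc_sum := tsum_lintegral_ofReal_eq_tsum_ofReal_integral hcY (fun _ _ => hc0 _) hc_fin
  have hd_sum := tsum_lintegral_ofReal_eq_tsum_ofReal_integral hdY (fun _ _ => hd0 _) hd_fin
  rw [hc_sum, hd_sum]
  refine coe_tsum_ofReal_le_of_telescoping (fun k => integral_nonneg fun _ => hc0 _)
    (fun k => integral_nonneg fun _ => hd0 _) (hc_sum ▸ hc_fin) (hd_sum ▸ hd_fin)
    (fun k => ?_) hVlim
  simp_rw [hYsucc]
  exact integral_add_integral_comp_le (hind k) (hY k) (hξ k) (hlaw k) hΦ hV hC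
    (integrable_of_tsum_lintegral_ne_top hcY (fun _ _ => hc0 _) hc_fin k)
    (integrable_of_tsum_lintegral_ne_top hdY (fun _ _ => hd0 _) hd_fin k) (hstep k)

end Expectation

theorem rollout_bound_state_dependent_error_general
    {X U W Ω : Type*} [MeasurableSpace X] [MeasurableSingletonClass X]
    [MeasurableSpace U] [MeasurableSpace W] [MeasurableSpace Ω]
    (μ : Measure W) [IsProbabilityMeasure μ] (P : Measure Ω) [IsProbabilityMeasure P]
    (t : X) (u0 : U) (F : X → U → W → X) (f : X → U → ℝ)
    -- SSP model: nonempty control sets, nonnegative measurable stage cost, measurable dynamics,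
    -- absorbing cost-free terminal state
    (hfnn : ∀ y u, 0 ≤ f y u)
    (hFmeas : Measurable fun p : X × U × W => F p.1 p.2.1 p.2.2)
    (hfmeas : Measurable fun p : X × U => f p.1 p.2)
    (hFt : ∀ w, F t u0 w = t)
    -- V* : bounded measurable, V*(t)=0, Bellman fixed point, well-defined one-step integrals
    (Vstar : X → ℝ) (hVsmeas : Measurable Vstar) (hVsbdd : ∃ C, ∀ y, |Vstar y| ≤ C)
    (hVst : Vstar t = 0)
    (π : X → U) (hπmeas : Measurable π) (hπt : π t = u0)
    -- i.i.d. disturbance sequence with common law μ on an abstract probability space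
    (ξ : ℕ → Ω → W) (hξmeas : ∀ k, Measurable (ξ k))
    (hξindep : iIndepFun ξ P)
    (hξlaw : ∀ k, P.map (ξ k) = μ)
    -- properness of the closed loop from x: τ < ∞ a.s. and J(x) < ∞
    (x : X)
    (hproper_tau : ∀ᵐ ω ∂P, hitTime t (trajOn F π x ξ) ω < ⊤)
    (hproper_J : totalCost P t f π (trajOn F π x ξ) < ⊤)
    (e : X → ℝ) (he0 : ∀ y, 0 ≤ e y) (hemeas : Measurable e)
    (honestep : ∀ ω k, trajOn F π x ξ k ω ≠ t →
      f (trajOn F π x ξ k ω) (π (trajOn F π x ξ k ω))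
        + ∫ w, Vstar (F (trajOn F π x ξ k ω) (π (trajOn F π x ξ k ω)) w) ∂μ
        ≤ Vstar (trajOn F π x ξ k ω) + e (trajOn F π x ξ k ω)) :
    (totalCost P t f π (trajOn F π x ξ) : EReal)
      ≤ (Vstar x : EReal) +
        ((∫⁻ ω, ∑' (k : ℕ), (if (k : ℝ≥0∞) < hitTime t (trajOn F π x ξ) ω
            then ENNReal.ofReal (e (trajOn F π x ξ k ω)) else 0) ∂P : ℝ≥0∞) : EReal) := by
  obtain ⟨C, hC⟩ := hVsbdd
  set Y := trajOn F π x ξ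
  have hFt' : ∀ w, F t (π t) w = t := hπt ▸ hFt
  have hY : ∀ k, Measurable (Y k) := measurable_trajOn hFmeas hπmeas hξmeas
  have habs : ∀ ω k n, k ≤ n → Y k ω = t → Y n ω = t := fun _ _ _ => trajOn_eq_of_le hFt'
  have hfπ : Measurable fun y => f y (π y) := hfmeas.comp (measurable_id.prodMk hπmeas)
  rw [totalCost, lintegral_tsum_ite_lt_hitTime hY habs hfπ] at hproper_J ⊢
  rw [lintegral_tsum_ite_lt_hitTime hY habs hemeas]
  have hb0 : ∫ ω, Vstar (Y 0 ω) ∂P = Vstar x := by simp [Y, trajOn_zero]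
  rw [← hb0]
  refine coe_tsum_lintegral_le_of_one_step_le (Φ := fun y w => F y (π y) w) hY hξmeas
    (fun _ _ => trajOn_succ _ _) (indepFun_trajOn hFmeas hπmeas hξmeas hξindep) hξlaw
    (hFmeas.comp (measurable_fst.prodMk ((hπmeas.comp measurable_fst).prodMk measurable_snd)))
    hVsmeas hC (tendsto_integral_comp_of_hitTime_lt_top hY habs hproper_tau hVsmeas hC hVst)
    (hfπ.indicator (measurableSet_singleton t).compl)
    (hemeas.indicator (measurableSet_singleton t).compl)
    (Set.indicator_nonneg fun y _ => hfnn y (π y)) (Set.indicator_nonneg fun y _ => he0 y)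
    hproper_J.ne fun k ω => ?_
  by_cases h : Y k ω = t
  · simp [h, hFt', hVst]
  · simpa [h] using honestep ω k h

/-- State-dependent error version of the rollout bound: if the one-step inequality
`f(x', π(x')) + ∫ V*(F(x', π(x'), w)) dμ(w) ≤ V*(x') + e(x')` holds (with `e ≥ 0`) at every
nonterminal state visited by the closed loop of a proper policy `π`, then
`J^π(x) - V*(x) ≤ E[ Σ_{k=0}^{τ-1} e(x_k) ]`, stated in `EReal`. -/
theorem rollout_bound_state_dependent_error
    {X U W Ω : Type*} [MeasurableSpace X] [MeasurableSingletonClass X]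
    [MeasurableSpace U] [MeasurableSpace W] [MeasurableSpace Ω]
    (μ : Measure W) [IsProbabilityMeasure μ] (P : Measure Ω) [IsProbabilityMeasure P]
    (t : X) (u0 : U) (Ua : X → Set U) (F : X → U → W → X) (f : X → U → ℝ)
    -- SSP model: nonempty control sets, nonnegative measurable stage cost, measurable dynamics,
    -- absorbing cost-free terminal state
    (hUne : ∀ y, (Ua y).Nonempty) (hfnn : ∀ y u, 0 ≤ f y u)
    (hFmeas : Measurable fun p : X × U × W => F p.1 p.2.1 p.2.2)
    (hfmeas : Measurable fun p : X × U => f p.1 p.2)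
    (hUt : Ua t = {u0}) (hft : f t u0 = 0) (hFt : ∀ w, F t u0 w = t)
    -- V* : bounded measurable, V*(t)=0, Bellman fixed point, well-defined one-step integrals
    (Vstar : X → ℝ) (hVsmeas : Measurable Vstar) (hVsbdd : ∃ C, ∀ y, |Vstar y| ≤ C)
    (hVst : Vstar t = 0) (hVsfix : ∀ y, Vstar y = bellman μ t Ua f F Vstar y)
    (hVsint : ∀ y u, Integrable (fun w => Vstar (F y u w)) μ)
    (π : X → U) (hπmeas : Measurable π) (hπt : π t = u0)
    -- i.i.d. disturbance sequence with common law μ on an abstract probability space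
    (ξ : ℕ → Ω → W) (hξmeas : ∀ k, Measurable (ξ k))
    (hξindep : iIndepFun ξ P)
    (hξlaw : ∀ k, P.map (ξ k) = μ)
    -- properness of the closed loop from x: τ < ∞ a.s. and J(x) < ∞
    (x : X)
    (hproper_tau : ∀ᵐ ω ∂P, hitTime t (trajOn F π x ξ) ω < ⊤)
    (hproper_J : totalCost P t f π (trajOn F π x ξ) < ⊤)
    (e : X → ℝ) (he0 : ∀ y, 0 ≤ e y) (hemeas : Measurable e)
    (honestep : ∀ ω k, trajOn F π x ξ k ω ≠ t →
      f (trajOn F π x ξ k ω) (π (trajOn F π x ξ k ω))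
        + ∫ w, Vstar (F (trajOn F π x ξ k ω) (π (trajOn F π x ξ k ω)) w) ∂μ
        ≤ Vstar (trajOn F π x ξ k ω) + e (trajOn F π x ξ k ω)) :
    (totalCost P t f π (trajOn F π x ξ) : EReal)
      ≤ (Vstar x : EReal) +
        ((∫⁻ ω, ∑' (k : ℕ), (if (k : ℝ≥0∞) < hitTime t (trajOn F π x ξ) ω
            then ENNReal.ofReal (e (trajOn F π x ξ k ω)) else 0) ∂P : ℝ≥0∞) : EReal) :=
  rollout_bound_state_dependent_error_general μ P t u0 F f hfnn hFmeas hfmeas hFt Vstar hVsmeas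
    hVsbdd hVst π hπmeas hπt ξ hξmeas hξindep hξlaw x hproper_tau hproper_J e he0 hemeas honestep
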